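/- arXiv:math/0503211 — 2 statements merged into one kernel-verified Lean document; each statement's English description precedes it below -/
import Mathlib

section
/- Let m be a finite measure on a measurable space T and let 0 < α ≤ 1. Then the kernel K(U,V) = m(U)^α + m(V)^α − m(U △ V)^α, defined on measurable sets of finite measure, is positive semidefinite: for any finite family of measurable sets U₁,…,Uₙ and reals u₁,…,uₙ, ∑_{i,j} K(Uᵢ,Uⱼ) uᵢ uⱼ ≥ 0. -/
/-!
Kernels of the form `exp (-c μ(U ∆ V))`, `c ≥ 0`, are positive semidefinite: writing
`μ(U ∆ V) = μ U + μ V - 2 μ(U ∩ V)`, it suffices to treat `exp (2c μ(U ∩ V))`, a series with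
nonnegative coefficients in `μ(U ∩ V) ^ k = μ^⊗k (U^k ∩ V^k)`, and each of these is a Gram kernel
of indicator functions. Integrating `exp (-c (t + μ(U ∆ V)))` over `c > 0` gives the positive
semidefinite kernel `(t + μ(U ∆ V))⁻¹`, `t > 0`. Adjoining `∅` as a base point turns it
into `t⁻¹ - (t + μ U)⁻¹ - (t + μ V)⁻¹ + (t + μ(U ∆ V))⁻¹`, which integrated against `t ^ α dt`
over `t > 0` gives, up to a positive constant, `μ U ^ α + μ V ^ α - μ(U ∆ V) ^ α` for `0 < α < 1`.
For `α = 1` the kernel is `2 μ(U ∩ V)`.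
-/

open MeasureTheory Set
open scoped symmDiff

def IsPosSemidefKernel {ι : Type*} [Fintype ι] (K : ι → ι → ℝ) : Prop :=
  ∀ v : ι → ℝ, 0 ≤ ∑ i, ∑ j, K i j * v i * v j

namespace IsPosSemidefKernel

variable {ι : Type*} [Fintype ι]

theorem mul_self (a : ι → ℝ) : IsPosSemidefKernel fun i j => a i * a j := by
  intro v
  have h : ∑ i, ∑ j, a i * a j * v i * v j = (∑ i, a i * v i) ^ 2 := by
    rw [sq, Finset.sum_mul_sum]
    exact Fintype.sum_congr _ _ fun i => Fintype.sum_congr _ _ fun j => by ring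
  exact h ▸ sq_nonneg _

theorem const_mul {K : ι → ι → ℝ} (hK : IsPosSemidefKernel K) {c : ℝ} (hc : 0 ≤ c) :
    IsPosSemidefKernel fun i j => c * K i j := by
  intro v
  simp_rw [mul_assoc c, ← Finset.mul_sum]
  exact mul_nonneg hc (hK v)

theorem conj {K : ι → ι → ℝ} (hK : IsPosSemidefKernel K) (w : ι → ℝ) :
    IsPosSemidefKernel fun i j => w i * K i j * w j := by
  intro v
  convert hK (w * v) using 1
  exact Fintype.sum_congr _ _ fun i => Fintype.sum_congr _ _ fun j => by
    simp only [Pi.mul_apply]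
    ring

theorem of_hasSum {K : ℕ → ι → ι → ℝ} {L : ι → ι → ℝ} (hK : ∀ k, IsPosSemidefKernel (K k))
    (hL : ∀ i j, HasSum (fun k => K k i j) (L i j)) : IsPosSemidefKernel L := fun v =>
  (hasSum_sum fun i _ => hasSum_sum fun j _ => ((hL i j).mul_right (v i)).mul_right (v j)).nonneg
    fun k => hK k v

theorem integral {S : Type*} [MeasurableSpace S] {ν : Measure S} {K : S → ι → ι → ℝ}
    (hK : ∀ᵐ t ∂ν, IsPosSemidefKernel (K t)) (hint : ∀ i j, Integrable (fun t => K t i j) ν) :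
    IsPosSemidefKernel fun i j => ∫ t, K t i j ∂ν := by
  intro v
  have hint' : ∀ i j, Integrable (fun t => K t i j * v i * v j) ν := fun i j =>
    ((hint i j).mul_const _).mul_const _
  calc 0 ≤ ∫ t, ∑ i, ∑ j, K t i j * v i * v j ∂ν := integral_nonneg_of_ae (hK.mono fun t ht => ht v)
    _ = _ := by
      rw [integral_finsetSum _ fun i _ => integrable_finsetSum _ fun j _ => hint' i j]
      simp_rw [integral_finsetSum _ fun j _ => hint' _ j, integral_mul_const]

theorem centered {K : Option ι → Option ι → ℝ} (hK : IsPosSemidefKernel K) :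
    IsPosSemidefKernel fun i j =>
      K (some i) (some j) - K (some i) none - K none (some j) + K none none := by
  intro v
  have h := hK fun p => p.elim (-∑ i, v i) v
  simp only [Fintype.sum_option, Option.elim] at h
  convert h using 1
  simp only [add_mul, sub_mul, mul_neg, neg_mul, Finset.sum_add_distrib, Finset.sum_sub_distrib,
    Finset.sum_neg_distrib]
  rw [Finset.sum_comm (f := fun i j => K none (some j) * v i * v j)]
  simp only [← Finset.sum_mul, ← Finset.mul_sum]
  ring

end IsPosSemidefKernel

section Measure

variable {T : Type*} [MeasurableSpace T] (μ : Measure T)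

theorem measureReal_symmDiff_eq_add_sub_inter {s t : Set T} (hs : MeasurableSet s)
    (ht : MeasurableSet t) (h₁ : μ s ≠ ⊤ := by finiteness) (h₂ : μ t ≠ ⊤ := by finiteness) :
    μ.real (s ∆ t) = μ.real s + μ.real t - 2 * μ.real (s ∩ t) := by
  rw [measureReal_symmDiff_eq hs ht h₁ h₂, ← measureReal_sdiff_add_inter ht h₁,
    ← measureReal_sdiff_add_inter hs h₂, inter_comm t s]
  ring

variable [IsFiniteMeasure μ] {ι : Type*} [Fintype ι] {A : ι → Set T}

theorem isPosSemidefKernel_measureReal_inter (hA : ∀ i, MeasurableSet (A i)) :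
    IsPosSemidefKernel fun i j => μ.real (A i ∩ A j) := by
  have hK : ∀ x, IsPosSemidefKernel fun i j => (A i ∩ A j).indicator (1 : T → ℝ) x := fun x => by
    simpa only [inter_indicator_one, Pi.mul_apply] using
      IsPosSemidefKernel.mul_self fun i => (A i).indicator (1 : T → ℝ) x
  simpa only [integral_indicator_one ((hA _).inter (hA _))] using
    IsPosSemidefKernel.integral (ν := μ) (ae_of_all _ hK)
      fun i j => (integrable_const 1).indicator ((hA i).inter (hA j))

theorem isPosSemidefKernel_measureReal_inter_pow (hA : ∀ i, MeasurableSet (A i)) (k : ℕ) :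
    IsPosSemidefKernel fun i j => μ.real (A i ∩ A j) ^ k := by
  have hpi : ∀ s : Set T,
      (Measure.pi fun _ : Fin k => μ).real (univ.pi fun _ => s) = μ.real s ^ k := fun s => by
    simp [measureReal_def, Measure.pi_pi, ENNReal.toReal_pow]
  simpa only [← pi_inter_distrib, hpi] using
    isPosSemidefKernel_measureReal_inter (Measure.pi fun _ : Fin k => μ)
      fun i => MeasurableSet.univ_pi fun _ => hA i

theorem isPosSemidefKernel_exp_neg_measureReal_symmDiff (hA : ∀ i, MeasurableSet (A i))
    {c : ℝ} (hc : 0 ≤ c) :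
    IsPosSemidefKernel fun i j => Real.exp (-(c * μ.real (A i ∆ A j))) := by
  have hexp : IsPosSemidefKernel fun i j => Real.exp (2 * c * μ.real (A i ∩ A j)) := by
    refine IsPosSemidefKernel.of_hasSum
      (fun k => (isPosSemidefKernel_measureReal_inter_pow μ hA k).const_mul
        (by positivity : 0 ≤ (2 * c) ^ k / k.factorial)) fun i j => ?_
    have h := NormedSpace.expSeries_div_hasSum_exp (2 * c * μ.real (A i ∩ A j))
    rw [← Real.exp_eq_exp_ℝ] at h
    simpa only [mul_pow, div_mul_eq_mul_div] using h
  convert hexp.conj fun i => Real.exp (-(c * μ.real (A i))) using 3 with i j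
  rw [measureReal_symmDiff_eq_add_sub_inter μ (hA i) (hA j), ← Real.exp_add, ← Real.exp_add]
  ring_nf

theorem isPosSemidefKernel_inv_add_measureReal_symmDiff (hA : ∀ i, MeasurableSet (A i))
    {t : ℝ} (ht : 0 < t) :
    IsPosSemidefKernel fun i j => (t + μ.real (A i ∆ A j))⁻¹ := by
  have hpos : ∀ i j, 0 < t + μ.real (A i ∆ A j) := fun i j => by positivity
  have hK : ∀ s ∈ Ioi (0 : ℝ),
      IsPosSemidefKernel fun i j => Real.exp (-(t + μ.real (A i ∆ A j)) * s) := fun s hs => by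
    convert (isPosSemidefKernel_exp_neg_measureReal_symmDiff μ hA hs.le).const_mul
      (Real.exp_pos (-(t * s))).le using 3 with i j
    rw [← Real.exp_add]
    ring_nf
  convert IsPosSemidefKernel.integral ((ae_restrict_mem measurableSet_Ioi).mono hK)
    fun i j => integrableOn_exp_mul_Ioi (neg_lt_zero.2 (hpos i j)) 0 using 3 with i j
  rw [integral_exp_mul_Ioi (neg_lt_zero.2 (hpos i j)), mul_zero, Real.exp_zero, neg_div_neg_eq,
    one_div]

theorem isPosSemidefKernel_rpowIntegrand₀₁_measureReal (hA : ∀ i, MeasurableSet (A i))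
    {p t : ℝ} (ht : 0 < t) :
    IsPosSemidefKernel fun i j =>
      Real.rpowIntegrand₀₁ p t (μ.real (A i)) + Real.rpowIntegrand₀₁ p t (μ.real (A j))
        - Real.rpowIntegrand₀₁ p t (μ.real (A i ∆ A j)) := by
  have hB : ∀ o : Option ι, MeasurableSet (o.elim ∅ A) := fun o => by
    cases o
    exacts [MeasurableSet.empty, hA _]
  have hbot : μ.real (⊥ : Set T) = 0 := measureReal_empty
  have h := ((isPosSemidefKernel_inv_add_measureReal_symmDiff μ hB ht).centered).const_mul
    (Real.rpow_nonneg ht.le p)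
  simp only [Option.elim, symmDiff_self, ← bot_eq_empty, symmDiff_bot, bot_symmDiff, hbot,
    add_zero] at h
  convert h using 3 with i j
  simp only [Real.rpowIntegrand₀₁]
  ring

theorem isPosSemidefKernel_measureReal_rpow_of_lt_one (hA : ∀ i, MeasurableSet (A i))
    {p : ℝ} (hp : p ∈ Ioo 0 1) :
    IsPosSemidefKernel fun i j => μ.real (A i) ^ p + μ.real (A j) ^ p - μ.real (A i ∆ A j) ^ p := by
  obtain ⟨ν, hν⟩ := Real.exists_measure_rpow_eq_integral_rpowIntegrand₀₁ hp
  have hint : ∀ s : Set T, IntegrableOn (Real.rpowIntegrand₀₁ p · (μ.real s)) (Ioi 0) ν :=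
    fun s => (hν _ measureReal_nonneg).1
  convert IsPosSemidefKernel.integral
    ((ae_restrict_mem measurableSet_Ioi).mono fun t ht =>
      isPosSemidefKernel_rpowIntegrand₀₁_measureReal μ hA ht)
    (fun i j => ((hint _).add (hint _)).sub (hint _)) using 3 with i j
  have hsum : IntegrableOn (fun t => Real.rpowIntegrand₀₁ p t (μ.real (A i))
      + Real.rpowIntegrand₀₁ p t (μ.real (A j))) (Ioi 0) ν := (hint _).add (hint _)
  rw [integral_sub hsum (hint _), integral_add (hint _) (hint _),
    ← (hν _ measureReal_nonneg).2, ← (hν _ measureReal_nonneg).2, ← (hν _ measureReal_nonneg).2]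

theorem isPosSemidefKernel_measureReal_add_sub_symmDiff (hA : ∀ i, MeasurableSet (A i)) :
    IsPosSemidefKernel fun i j => μ.real (A i) + μ.real (A j) - μ.real (A i ∆ A j) := by
  convert (isPosSemidefKernel_measureReal_inter μ hA).const_mul zero_le_two using 3 with i j
  rw [measureReal_symmDiff_eq_add_sub_inter μ (hA i) (hA j)]
  ring

end Measure

theorem kernel_posSemidef
    {T : Type*} [MeasurableSpace T] (m : Measure T) [IsFiniteMeasure m]
    (α : ℝ) (hα0 : 0 < α) (hα1 : α ≤ 1)
    (n : ℕ) (U : Fin n → Set T) (hU : ∀ i, MeasurableSet (U i))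
    (u : Fin n → ℝ) :
    0 ≤ ∑ i, ∑ j,
      ((m (U i)).toReal ^ α + (m (U j)).toReal ^ α
        - (m (symmDiff (U i) (U j))).toReal ^ α) * u i * u j := by
  rcases hα1.lt_or_eq with hlt | rfl
  · exact isPosSemidefKernel_measureReal_rpow_of_lt_one m hU ⟨hα0, hlt⟩ u
  · simp only [Real.rpow_one]
    exact isPosSemidefKernel_measureReal_add_sub_symmDiff m hU u
end

section
/- Let H be a real inner product space, λ > 0, and 0 < α ≤ 1. Then the kernel (f,g) ↦ exp(−λ‖f−g‖^{2α}) is positive semidefinite on H: for any f₁,…,fₙ ∈ H and u₁,…,uₙ ∈ ℝ, ∑_{i,j} exp(−λ‖fᵢ−fⱼ‖^{2α}) uᵢ uⱼ ≥ 0. -/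
/-!
For `0 < α < 1` one has `r ^ α = C⁻¹ ∫₀^∞ (1 - e^{-rt}) t^{-1-α} dt` with `C > 0`. Since squared
Hilbert distances are conditionally negative semidefinite, Schoenberg's theorem makes every
Gaussian kernel `e^{-t‖x - y‖²}` positive semidefinite; hence `1 - e^{-t‖x - y‖²}`, and after
integration `‖x - y‖^{2α}`, is again conditionally negative semidefinite. A second application
of Schoenberg's theorem, which rests on the Schur product theorem through the exponential
series, gives the claim.
-/

open Finset Matrix MeasureTheory Real Set
open scoped ComplexOrder

theorem one_sub_exp_neg_mem_Icc {x : ℝ} (hx : 0 ≤ x) : 1 - exp (-x) ∈ Icc 0 (min x 1) := by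
  refine ⟨by linarith [exp_le_one_iff.mpr (neg_nonpos.mpr hx)], le_min ?_ ?_⟩
  · linarith [add_one_le_exp (-x)]
  · linarith [exp_pos (-x)]

theorem integrableOn_one_sub_exp_neg_mul_mul_rpow {α r : ℝ} (hα0 : 0 < α) (hα1 : α < 1)
    (hr : 0 ≤ r) : IntegrableOn (fun t => (1 - exp (-(r * t))) * t ^ (-1 - α)) (Ioi 0) := by
  have hmeas : ∀ s ⊆ Ioi (0 : ℝ),
      AEStronglyMeasurable (fun t => (1 - exp (-(r * t))) * t ^ (-1 - α)) (volume.restrict s) :=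
    fun s hs => ((ContinuousOn.mul (by fun_prop) (continuousOn_id.rpow_const fun t ht => Or.inl
      (ne_of_gt ht))).aestronglyMeasurable measurableSet_Ioi).mono_set hs
  have hbound : ∀ t ∈ Ioi (0 : ℝ),
      ‖(1 - exp (-(r * t))) * t ^ (-1 - α)‖ ≤ min (r * t) 1 * t ^ (-1 - α) := fun t ht => by
    obtain ⟨h0, h1⟩ := one_sub_exp_neg_mem_Icc (mul_nonneg hr (le_of_lt ht))
    have hp := rpow_nonneg (le_of_lt ht) (-1 - α)
    rw [norm_of_nonneg (mul_nonneg h0 hp)]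
    exact mul_le_mul_of_nonneg_right h1 hp
  rw [← Ioc_union_Ioi_eq_Ioi zero_le_one]
  refine IntegrableOn.union ?_ ?_
  · have hint : IntegrableOn (fun t => r * t ^ (-α)) (Ioc 0 1) := by
      refine Integrable.const_mul ?_ r
      have := intervalIntegral.intervalIntegrable_rpow' (a := 0) (b := 1) (r := -α) (by linarith)
      rwa [intervalIntegrable_iff, uIoc_of_le zero_le_one] at this
    refine hint.mono' (hmeas _ Ioc_subset_Ioi_self) (ae_restrict_of_forall_mem measurableSet_Ioc
      fun t ht => (hbound t ht.1).trans ?_)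
    calc min (r * t) 1 * t ^ (-1 - α) ≤ r * t * t ^ (-1 - α) :=
          mul_le_mul_of_nonneg_right (min_le_left _ _) (rpow_nonneg (le_of_lt ht.1) _)
      _ = r * t ^ (-α) := by
          rw [mul_assoc, ← rpow_one_add' (le_of_lt ht.1) (by linarith)]
          ring_nf
  · refine (integrableOn_Ioi_rpow_of_lt (by linarith : -1 - α < -1) one_pos).mono'
      (hmeas _ (Ioi_subset_Ioi zero_le_one)) (ae_restrict_of_forall_mem measurableSet_Ioi
      fun t (ht : 1 < t) => (hbound t (one_pos.trans ht)).trans ?_)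
    exact mul_le_of_le_one_left (rpow_nonneg (by linarith) _) (min_le_right _ _)

theorem integral_one_sub_exp_neg_mul_mul_rpow {α r : ℝ} (hα : α ≠ 0) (hr : 0 ≤ r) :
    ∫ t in Ioi 0, (1 - exp (-(r * t))) * t ^ (-1 - α)
      = r ^ α * ∫ t in Ioi 0, (1 - exp (-t)) * t ^ (-1 - α) := by
  rcases hr.eq_or_lt with rfl | hr
  · simp [zero_rpow hα]
  have hsubst := integral_comp_mul_left_Ioi (fun s => (1 - exp (-s)) * s ^ (-1 - α)) 0 hr
  have hfactor : ∀ t ∈ Ioi (0 : ℝ), (1 - exp (-(r * t))) * (r * t) ^ (-1 - α)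
      = r ^ (-1 - α) * ((1 - exp (-(r * t))) * t ^ (-1 - α)) := fun t ht => by
    rw [mul_rpow hr.le (le_of_lt ht)]
    ring
  rw [setIntegral_congr_fun measurableSet_Ioi hfactor, integral_const_mul, mul_zero,
    smul_eq_mul] at hsubst
  have hpow : r ^ α * r ^ (-1 - α) = r⁻¹ := by
    rw [← rpow_add hr, ← rpow_neg_one]
    ring_nf
  rw [← hpow, mul_assoc] at hsubst
  refine mul_left_cancel₀ (rpow_pos_of_pos hr (-1 - α)).ne' ?_
  rw [hsubst]
  ring

theorem integral_one_sub_exp_neg_mul_rpow_pos {α : ℝ} (hα0 : 0 < α) (hα1 : α < 1) :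
    0 < ∫ t in Ioi 0, (1 - exp (-t)) * t ^ (-1 - α) := by
  have hpos : ∀ t ∈ Ioi (0 : ℝ), 0 < (1 - exp (-t)) * t ^ (-1 - α) := fun t ht =>
    mul_pos (by linarith [exp_lt_one_iff.mpr (neg_lt_zero.mpr ht)]) (rpow_pos_of_pos ht _)
  have hint := integrableOn_one_sub_exp_neg_mul_mul_rpow hα0 hα1 zero_le_one
  simp only [one_mul] at hint
  rw [setIntegral_pos_iff_support_of_nonneg_ae
    (ae_restrict_of_forall_mem measurableSet_Ioi fun t ht => (hpos t ht).le) hint,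
    inter_eq_self_of_subset_right fun t ht => Function.mem_support.mpr (hpos t ht).ne', volume_Ioi]
  exact ENNReal.zero_lt_top

namespace Matrix

variable {ι 𝕜 : Type*} [RCLike 𝕜]

theorem PosSemidef.map_pow [Finite ι] {A : Matrix ι ι 𝕜} (hA : A.PosSemidef) (k : ℕ) :
    (A.map (· ^ k)).PosSemidef := by
  induction k with
  | zero =>
    convert posSemidef_vecMulVec_self_star (1 : ι → 𝕜) using 1
    ext; simp
  | succ k ih =>
    have hpow : A.map (· ^ (k + 1)) = A.map (· ^ k) ⊙ A := by ext; simp [pow_succ]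
    rw [hpow]
    exact ih.hadamard hA

variable [Fintype ι]

theorem dotProduct_mulVec_eq_sum {R : Type*} [CommSemiring R] (A : Matrix ι ι R) (x : ι → R) :
    x ⬝ᵥ A *ᵥ x = ∑ i, ∑ j, x i * x j * A i j := by
  simp only [dotProduct, mulVec, mul_sum]
  exact sum_congr rfl fun i _ => sum_congr rfl fun j _ => by ring

theorem PosSemidef.map_exp {A : Matrix ι ι ℝ} (hA : A.PosSemidef) : (A.map exp).PosSemidef := by
  refine posSemidef_iff_dotProduct_mulVec.mpr ⟨?_, fun x => ?_⟩
  · simpa [isHermitian_iff_isSymm, IsSymm.ext_iff] using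
      fun i j => congrArg exp (hA.1.apply i j)
  have hsum : HasSum (fun k => (k.factorial : ℝ)⁻¹ * (x ⬝ᵥ A.map (· ^ k) *ᵥ x))
      (x ⬝ᵥ A.map exp *ᵥ x) := by
    simp only [dotProduct_mulVec_eq_sum, map_apply, mul_sum, exp_eq_exp_ℝ]
    refine hasSum_sum fun i _ => hasSum_sum fun j _ => ?_
    exact ((NormedSpace.expSeries_div_hasSum_exp (A i j)).mul_left (x i * x j)).congr_fun
      fun k => by ring
  exact hsum.nonneg fun k => mul_nonneg (by positivity)
    (by simpa using (hA.map_pow k).dotProduct_mulVec_nonneg x)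

def CondNegSemidef (A : Matrix ι ι ℝ) : Prop :=
  A.IsSymm ∧ ∀ c : ι → ℝ, ∑ i, c i = 0 → c ⬝ᵥ A *ᵥ c ≤ 0

theorem CondNegSemidef.smul {A : Matrix ι ι ℝ} (hA : A.CondNegSemidef) {a : ℝ} (ha : 0 ≤ a) :
    (a • A).CondNegSemidef :=
  ⟨hA.1.smul a, fun c hc => by
    rw [smul_mulVec, dotProduct_smul, smul_eq_mul]
    exact mul_nonpos_of_nonneg_of_nonpos ha (hA.2 c hc)⟩

theorem PosSemidef.condNegSemidef_one_sub {B : Matrix ι ι ℝ} (hB : B.PosSemidef) :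
    (of fun i j => 1 - B i j).CondNegSemidef := by
  refine ⟨?_, fun c hc => ?_⟩
  · ext i j
    simp [(isHermitian_iff_isSymm.mp hB.1).apply i j]
  have hB' := hB.dotProduct_mulVec_nonneg c
  rw [star_trivial, dotProduct_mulVec_eq_sum] at hB'
  have hones : ∑ i, ∑ j, c i * c j = 0 := by rw [← sum_mul_sum, hc, zero_mul]
  simp only [dotProduct_mulVec_eq_sum, of_apply, mul_sub, mul_one, sum_sub_distrib, hones]
  linarith

theorem condNegSemidef_integral {T : Type*} [MeasurableSpace T] {μ : Measure T}
    {F : T → Matrix ι ι ℝ} (hF : ∀ᵐ t ∂μ, (F t).CondNegSemidef)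
    (hint : ∀ i j, Integrable (fun t => F t i j) μ) :
    (of fun i j => ∫ t, F t i j ∂μ).CondNegSemidef := by
  refine ⟨?_, fun c hc => ?_⟩
  · ext i j
    exact integral_congr_ae (hF.mono fun t ht => ht.1.apply i j)
  have hq : c ⬝ᵥ (of fun i j => ∫ t, F t i j ∂μ) *ᵥ c = ∫ t, c ⬝ᵥ F t *ᵥ c ∂μ := by
    simp only [dotProduct_mulVec_eq_sum, of_apply]
    rw [integral_finsetSum _ fun i _ => integrable_finsetSum _ fun j _ => (hint i j).const_mul _]
    refine sum_congr rfl fun i _ => ?_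
    rw [integral_finsetSum _ fun j _ => (hint i j).const_mul _]
    simp only [integral_const_mul]
  rw [hq]
  exact integral_nonpos_of_ae (hF.mono fun t ht => ht.2 c hc)

theorem IsSymm.dotProduct_mulVec_basepoint [DecidableEq ι] {A : Matrix ι ι ℝ} (hA : A.IsSymm)
    (i₀ : ι) (x : ι → ℝ) :
    x ⬝ᵥ (of fun i j => A i i₀ + A j i₀ - A i j - A i₀ i₀) *ᵥ x =
      -((x - Pi.single i₀ (∑ i, x i)) ⬝ᵥ A *ᵥ (x - Pi.single i₀ (∑ i, x i))) := by
  have hsymm : ∀ j, A i₀ j = A j i₀ := fun j => hA.apply j i₀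
  simp only [dotProduct_mulVec_eq_sum, Pi.sub_apply, of_apply, Pi.single_apply, mul_sub, sub_mul,
    mul_add, sum_sub_distrib, sum_add_distrib, mul_ite, ite_mul, mul_zero, zero_mul, sum_ite_irrel,
    sum_const_zero, sum_ite_eq', Finset.mem_univ, if_true, ← mul_sum, ← sum_mul, hsymm]
  simp only [mul_assoc, ← mul_sum, ← sum_mul]
  ring

theorem CondNegSemidef.posSemidef_basepoint [DecidableEq ι] {A : Matrix ι ι ℝ}
    (hA : A.CondNegSemidef) (i₀ : ι) :
    (of fun i j => A i i₀ + A j i₀ - A i j - A i₀ i₀).PosSemidef := by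
  refine posSemidef_iff_dotProduct_mulVec.mpr ⟨?_, fun x => ?_⟩
  · ext i j
    simp only [conjTranspose_apply, of_apply, star_trivial, hA.1.apply i j]
    ring
  rw [star_trivial, hA.1.dotProduct_mulVec_basepoint, neg_nonneg]
  exact hA.2 _ (by simp [sum_sub_distrib])

/-- Schoenberg's theorem. -/
theorem CondNegSemidef.posSemidef_map_exp_neg {A : Matrix ι ι ℝ} (hA : A.CondNegSemidef)
    {t : ℝ} (ht : 0 ≤ t) : (A.map fun a => exp (-t * a)).PosSemidef := by
  rcases isEmpty_or_nonempty ι with hι | ⟨⟨i₀⟩⟩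
  · exact Subsingleton.elim 0 (A.map fun a => exp (-t * a)) ▸ .zero
  classical
  -- `exp (-t A i j) = d i * exp (t K i j) * d j` for the base-point matrix `K`
  have hconj := ((hA.posSemidef_basepoint i₀).smul ht).map_exp.mul_mul_conjTranspose_same
    (diagonal fun i => exp (t * (A i₀ i₀ / 2 - A i i₀)))
  convert hconj using 1
  ext i j
  simp only [map_apply, diagonal_mul, mul_diagonal, diagonal_conjTranspose, star_trivial,
    smul_apply, of_apply, smul_eq_mul]
  rw [← exp_add, ← exp_add]
  congr 1
  ring

theorem CondNegSemidef.map_rpow {A : Matrix ι ι ℝ} (hA : A.CondNegSemidef)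
    (hA0 : ∀ i j, 0 ≤ A i j) {α : ℝ} (hα0 : 0 < α) (hα1 : α ≤ 1) :
    (A.map (· ^ α)).CondNegSemidef := by
  rcases hα1.eq_or_lt with rfl | hα1
  · simpa using hA
  have hC := integral_one_sub_exp_neg_mul_rpow_pos hα0 hα1
  have hF : ∀ t ∈ Ioi (0 : ℝ),
      (of fun i j => (1 - exp (-(A i j * t))) * t ^ (-1 - α)).CondNegSemidef := fun t ht => by
    convert ((hA.posSemidef_map_exp_neg (le_of_lt ht)).condNegSemidef_one_sub).smul
      (rpow_nonneg (le_of_lt ht) (-1 - α)) using 1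
    ext i j
    simp only [of_apply, smul_apply, map_apply, smul_eq_mul]
    ring_nf
  have hint := condNegSemidef_integral (ae_restrict_of_forall_mem measurableSet_Ioi hF)
    fun i j => integrableOn_one_sub_exp_neg_mul_mul_rpow hα0 hα1 (hA0 i j)
  convert hint.smul (inv_nonneg.mpr hC.le) using 1
  ext i j
  simp only [smul_apply, of_apply, map_apply, smul_eq_mul]
  rw [integral_one_sub_exp_neg_mul_mul_rpow hα0.ne' (hA0 i j)]
  field_simp

theorem dotProduct_mulVec_norm_sub_sq {E : Type*} [SeminormedAddCommGroup E]
    [InnerProductSpace ℝ E] (x : ι → E) {c : ι → ℝ} (hc : ∑ i, c i = 0) :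
    c ⬝ᵥ (of fun i j => ‖x i - x j‖ ^ 2) *ᵥ c = -2 * ‖∑ i, c i • x i‖ ^ 2 := by
  have hleft : ∑ i, ∑ j, c i * c j * ‖x i‖ ^ 2 = 0 := by simp [← sum_mul, ← mul_sum, hc]
  have hright : ∑ i, ∑ j, c i * c j * ‖x j‖ ^ 2 = 0 := by
    simp [mul_assoc, ← mul_sum, ← sum_mul, hc]
  have hinner : ∑ i, ∑ j, c i * c j * inner ℝ (x i) (x j) = ‖∑ i, c i • x i‖ ^ 2 := by
    rw [← real_inner_self_eq_norm_sq]
    simp only [sum_inner, inner_sum, real_inner_smul_left, real_inner_smul_right]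
    exact sum_congr rfl fun i _ => sum_congr rfl fun j _ => by rw [real_inner_comm]; ring
  simp only [dotProduct_mulVec_eq_sum, of_apply, norm_sub_sq_real, mul_add, mul_sub,
    sum_add_distrib, sum_sub_distrib, hleft, hright, mul_left_comm _ (2 : ℝ), ← mul_sum, hinner]
  ring

theorem condNegSemidef_norm_sub_sq {E : Type*} [SeminormedAddCommGroup E]
    [InnerProductSpace ℝ E] (x : ι → E) : (of fun i j => ‖x i - x j‖ ^ 2).CondNegSemidef := by
  refine ⟨?_, fun c hc => ?_⟩
  · ext i j
    simp [norm_sub_rev]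
  rw [dotProduct_mulVec_norm_sub_sq x hc]
  nlinarith [sq_nonneg ‖∑ i, c i • x i‖]

end Matrix

theorem exp_neg_norm_rpow_posSemidef
    {H : Type*} [NormedAddCommGroup H] [InnerProductSpace ℝ H]
    (lam : ℝ) (hlam : 0 < lam)
    (α : ℝ) (hα0 : 0 < α) (hα1 : α ≤ 1)
    (n : ℕ) (f : Fin n → H) (u : Fin n → ℝ) :
    0 ≤ ∑ i, ∑ j, Real.exp (-lam * ‖f i - f j‖ ^ (2 * α)) * u i * u j := by
  have hdist := (condNegSemidef_norm_sub_sq f).map_rpow (fun _ _ => sq_nonneg _) hα0 hα1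
  have hq := (hdist.posSemidef_map_exp_neg hlam.le).dotProduct_mulVec_nonneg u
  rw [star_trivial, dotProduct_mulVec_eq_sum] at hq
  refine hq.trans_eq (sum_congr rfl fun i _ => sum_congr rfl fun j _ => ?_)
  simp only [map_apply, of_apply]
  rw [← rpow_natCast_mul (norm_nonneg _), Nat.cast_ofNat]
  ring
end
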